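/- Let X be a geodesic metric space, η ≥ 0, and suppose x₁, x₂, x₃ ∈ X are η-almost lined up in this order: there exists a geodesic segment σ such that each xᵢ is within distance η of σ and the closest-point projections p_σ(x₁), p_σ(x₂), p_σ(x₃) are lined up in this order on σ. Then |(x₂|x₃)_{x₁} − |x₁ − x₂|| ≤ 5η, where (x₂|x₃)_{x₁} = ½(|x₁−x₂| + |x₁−x₃| − |x₂−x₃|) is the Gromov product. -/
import Mathlib

/-- Gromov product of `η`-almost lined up points `x₁, x₂, x₃` (in this order along a geodesic
segment `σ`): `|(x₂|x₃)_{x₁} - |x₁ - x₂|| ≤ 5η`. -/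
theorem gromov_product_almost_lined_up
    (X : Type*) [MetricSpace X] (η : ℝ) (hη : 0 ≤ η)
    (x₁ x₂ x₃ : X)
    (σ : ℝ → X) (L : ℝ) (hL : 0 ≤ L)
    (hσ : ∀ s ∈ Set.Icc (0 : ℝ) L, ∀ t ∈ Set.Icc (0 : ℝ) L, dist (σ s) (σ t) = |s - t|)
    (s₁ s₂ s₃ : ℝ)
    (hs₁ : s₁ ∈ Set.Icc (0 : ℝ) L) (hs₂ : s₂ ∈ Set.Icc (0 : ℝ) L)
    (hs₃ : s₃ ∈ Set.Icc (0 : ℝ) L)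
    (horder : (s₁ ≤ s₂ ∧ s₂ ≤ s₃) ∨ (s₃ ≤ s₂ ∧ s₂ ≤ s₁))
    (hproj₁ : ∀ s ∈ Set.Icc (0 : ℝ) L, dist x₁ (σ s₁) ≤ dist x₁ (σ s))
    (hproj₂ : ∀ s ∈ Set.Icc (0 : ℝ) L, dist x₂ (σ s₂) ≤ dist x₂ (σ s))
    (hproj₃ : ∀ s ∈ Set.Icc (0 : ℝ) L, dist x₃ (σ s₃) ≤ dist x₃ (σ s))
    (hnear₁ : dist x₁ (σ s₁) ≤ η) (hnear₂ : dist x₂ (σ s₂) ≤ η)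
    (hnear₃ : dist x₃ (σ s₃) ≤ η) :
    |(dist x₁ x₂ + dist x₁ x₃ - dist x₂ x₃) / 2 - dist x₁ x₂| ≤ 5 * η := by
  have key : |s₁ - s₂| + |s₂ - s₃| = |s₁ - s₃| := by
    rcases horder with ⟨a, b⟩ | ⟨a, b⟩
    · rw [abs_of_nonpos (by linarith), abs_of_nonpos (by linarith),
        abs_of_nonpos (by linarith)]; ring
    · rw [abs_of_nonneg (by linarith), abs_of_nonneg (by linarith),
        abs_of_nonneg (by linarith)]; ring
  have h12 : dist x₁ x₂ ≤ |s₁ - s₂| + 2 * η := by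
    have t := dist_triangle4 x₁ (σ s₁) (σ s₂) x₂
    rw [hσ s₁ hs₁ s₂ hs₂, dist_comm (σ s₂) x₂] at t
    linarith
  have h23 : dist x₂ x₃ ≤ |s₂ - s₃| + 2 * η := by
    have t := dist_triangle4 x₂ (σ s₂) (σ s₃) x₃
    rw [hσ s₂ hs₂ s₃ hs₃, dist_comm (σ s₃) x₃] at t
    linarith
  have h13 : |s₁ - s₃| ≤ dist x₁ x₃ + 2 * η := by
    have t := dist_triangle4 (σ s₁) x₁ x₃ (σ s₃)
    rw [hσ s₁ hs₁ s₃ hs₃, dist_comm (σ s₁) x₁] at t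
    linarith
  have tri : dist x₁ x₃ ≤ dist x₁ x₂ + dist x₂ x₃ := dist_triangle x₁ x₂ x₃
  rw [abs_le]
  constructor <;> linarith
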